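/- Let f : F_2^n → {-1,1} and let B be a symmetric n×n matrix over F_2 with zero diagonal such that E_y f̂_y^2(By) ≥ ε. Then there exists a quadratic polynomial g over F_2 (i.e., a function g(x) = (-1)^{⟨x,Ax⟩ + ⟨x,α⟩ + a} with A + A^T = B) whose distance from f is at most 1/2 − ε/2, i.e., |E_x f(x)g(x)| ≥ ε (up to a constant). -/

import Mathlib

open Finset

/-- The character `(-1)^{⟨α,x⟩}` on `F_2^n`. -/
noncomputable def chi {n : ℕ} (α x : Fin n → ZMod 2) : ℝ :=
  (-1 : ℝ) ^ ((∑ i, α i * x i : ZMod 2)).val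

/-- Fourier coefficient `f̂(α) = E_x f(x)(-1)^{⟨α,x⟩}`. -/
noncomputable def fCoeff {n : ℕ} (f : (Fin n → ZMod 2) → ℝ) (α : Fin n → ZMod 2) : ℝ :=
  (∑ x, f x * chi α x) / 2 ^ n

/-- Discrete derivative `f_y(x) = f(x) f(x+y)`. -/
noncomputable def dderiv {n : ℕ} (f : (Fin n → ZMod 2) → ℝ) (y : Fin n → ZMod 2) :
    (Fin n → ZMod 2) → ℝ := fun x => f x * f (x + y)

/-- `‖f‖_{U_d}^{2^d} = E_{x,y_1,…,y_d} ∏_{S ⊆ [d]} f(x + Σ_{i∈S} y_i)`. -/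
noncomputable def gowersPow {n : ℕ} (d : ℕ) (f : (Fin n → ZMod 2) → ℝ) : ℝ :=
  (∑ x : Fin n → ZMod 2, ∑ y : Fin d → Fin n → ZMod 2,
      ∏ S : Finset (Fin d), f (x + ∑ i ∈ S, y i)) / ((2 : ℝ) ^ n) ^ (d + 1)

/-- The Gowers uniformity norm `‖f‖_{U_d}`. -/
noncomputable def gowersNorm {n : ℕ} (d : ℕ) (f : (Fin n → ZMod 2) → ℝ) : ℝ :=
  gowersPow d f ^ ((1 : ℝ) / 2 ^ d)

/-!
Let `A` be the strictly upper triangular part of `B`, so that `A + Aᵀ = B`, and twist `f` by the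
quadratic phase: `H x = f x (-1)^{⟨x, Ax⟩}`. Because
`⟨x+y, A(x+y)⟩ = ⟨x, Ax⟩ + ⟨x, By⟩ + ⟨y, Ay⟩`, the derivative `H_y` is `f_y` times the character
of `By` up to a sign, so `Ĥ_y(0)² = f̂_y(By)²`. The hypothesis therefore says
`E_y Ĥ_y(0)² = Σ_α Ĥ(α)⁴ ≥ ε`, and with Parseval `Σ_α Ĥ(α)² = 1` some `Ĥ(α)²`, hence `|Ĥ(α)|`,
is at least `ε`. The quadratic polynomial `(-1)^{⟨x, Ax⟩ + ⟨x, α⟩ + a}`, with `a` chosen to match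
the sign of `Ĥ(α)`, then agrees with `f` on a fraction `(1 + |Ĥ(α)|) / 2` of the points.
-/

open Matrix

noncomputable def signChar : AddChar (ZMod 2) ℝ :=
  AddChar.zmodChar 2 (ζ := (-1 : ℝ)) (by norm_num)

lemma signChar_apply (a : ZMod 2) : signChar a = (-1 : ℝ) ^ a.val := rfl

lemma signChar_sq (a : ZMod 2) : signChar a ^ 2 = 1 := by
  rw [sq, ← AddChar.map_add_eq_mul, ZModModule.add_self, AddChar.map_zero_eq_one]

lemma signChar_eq_one_or_eq_neg_one (a : ZMod 2) : signChar a = 1 ∨ signChar a = -1 :=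
  sq_eq_one_iff.mp (signChar_sq a)

lemma exists_signChar_mul_eq_abs (t : ℝ) : ∃ a : ZMod 2, signChar a * t = |t| := by
  rcases le_or_gt 0 t with ht | ht
  · exact ⟨0, by rw [AddChar.map_zero_eq_one, one_mul, abs_of_nonneg ht]⟩
  · refine ⟨1, ?_⟩
    rw [signChar_apply, ZMod.val_one, pow_one, abs_of_neg ht, neg_one_mul]

section Characters

variable {n : ℕ}

lemma chi_eq_signChar (α x : Fin n → ZMod 2) : chi α x = signChar (α ⬝ᵥ x) := rfl

lemma chi_comm (α x : Fin n → ZMod 2) : chi α x = chi x α := by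
  rw [chi_eq_signChar, chi_eq_signChar, dotProduct_comm]

lemma chi_add_left (α β x : Fin n → ZMod 2) : chi (α + β) x = chi α x * chi β x := by
  simp only [chi_eq_signChar, add_dotProduct, AddChar.map_add_eq_mul]

lemma chi_add_right (α x y : Fin n → ZMod 2) : chi α (x + y) = chi α x * chi α y := by
  simp only [chi_eq_signChar, dotProduct_add, AddChar.map_add_eq_mul]

lemma chi_zero_right (α : Fin n → ZMod 2) : chi α 0 = 1 := by
  rw [chi_eq_signChar, dotProduct_zero, AddChar.map_zero_eq_one]

lemma chi_zero_left (x : Fin n → ZMod 2) : chi 0 x = 1 := by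
  rw [chi_comm, chi_zero_right]

lemma chi_sq (α x : Fin n → ZMod 2) : chi α x ^ 2 = 1 := signChar_sq _

lemma sum_chi_left (z : Fin n → ZMod 2) :
    ∑ α, chi α z = if z = 0 then (2 : ℝ) ^ n else 0 := by
  split_ifs with hz
  · simp [hz, chi_zero_right]
  obtain ⟨i, hi⟩ : ∃ i, z i ≠ 0 := Function.ne_iff.mp hz
  have hflip : chi (Pi.single i 1) z = -1 := by
    rw [chi_comm, chi_eq_signChar, dotProduct_single, mul_one, signChar_apply,
      (ZMod.val_eq_one (by norm_num) _).mpr (Fin.eq_one_of_ne_zero _ hi), pow_one]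
  have hshift : ∑ α, chi α z = ∑ α, chi (Pi.single i 1 + α) z :=
    (Fintype.sum_equiv (Equiv.addLeft (Pi.single i 1)) _ _ fun _ => rfl).symm
  simp only [chi_add_left, hflip, neg_one_mul, sum_neg_distrib] at hshift
  exact self_eq_neg.mp hshift

lemma sum_chi_mul_chi (x y : Fin n → ZMod 2) :
    ∑ α, chi α x * chi α y = if x = y then (2 : ℝ) ^ n else 0 := by
  simp only [← chi_add_right, sum_chi_left, ← ZModModule.sub_eq_add, sub_eq_zero]

end Characters

section Fourier

variable {n : ℕ}

lemma sum_fCoeff_sq (h : (Fin n → ZMod 2) → ℝ) :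
    ∑ α, fCoeff h α ^ 2 = (∑ x, h x ^ 2) / 2 ^ n := by
  have hsum : ∑ α, (∑ x, h x * chi α x) ^ 2 = 2 ^ n * ∑ x, h x ^ 2 := by
    calc ∑ α, (∑ x, h x * chi α x) ^ 2
        = ∑ α, ∑ x, ∑ y, h x * h y * (chi α x * chi α y) :=
          sum_congr rfl fun α _ => by
            rw [sq, sum_mul_sum]
            exact sum_congr rfl fun x _ => sum_congr rfl fun y _ => by ring
      _ = ∑ x, ∑ y, h x * h y * ∑ α, chi α x * chi α y := by
          rw [sum_comm]
          simp only [mul_sum]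
          exact sum_congr rfl fun x _ => sum_comm
      _ = 2 ^ n * ∑ x, h x ^ 2 := by
          simp only [sum_chi_mul_chi, mul_ite, mul_zero, sum_ite_eq, mem_univ, if_true, mul_sum]
          exact sum_congr rfl fun x _ => by ring
  simp only [fCoeff, div_pow, ← sum_div, hsum]
  field_simp

lemma fCoeff_fCoeff_dderiv (h : (Fin n → ZMod 2) → ℝ) (α : Fin n → ZMod 2) :
    fCoeff (fun y => fCoeff (dderiv h y) 0) α = fCoeff h α ^ 2 := by
  have hsum : ∑ y, (∑ x, h x * h (x + y)) * chi α y = (∑ x, h x * chi α x) ^ 2 := by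
    calc ∑ y, (∑ x, h x * h (x + y)) * chi α y
        = ∑ x, h x * chi α x * ∑ y, h (x + y) * chi α (x + y) := by
          simp only [sum_mul, mul_sum]
          rw [sum_comm]
          refine sum_congr rfl fun x _ => sum_congr rfl fun y _ => ?_
          -- `chi α y = chi α x * chi α (x + y)` since `chi α x ^ 2 = 1`
          rw [chi_add_right]
          linear_combination -(h x * h (x + y) * chi α y) * chi_sq α x
      _ = (∑ x, h x * chi α x) ^ 2 := by
          rw [sq, sum_mul]
          exact sum_congr rfl fun x _ =>
            congrArg _ (Equiv.sum_comp (Equiv.addLeft x) fun z => h z * chi α z)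
  simp only [fCoeff, dderiv, chi_zero_left, mul_one, div_pow, ← sum_div, div_mul_eq_mul_div, hsum]
  field_simp

lemma sum_fCoeff_pow_four (h : (Fin n → ZMod 2) → ℝ) :
    ∑ α, fCoeff h α ^ 4 = (∑ y, fCoeff (dderiv h y) 0 ^ 2) / 2 ^ n := by
  simp only [← sum_fCoeff_sq, fCoeff_fCoeff_dderiv, ← pow_mul]

end Fourier

lemma add_dotProduct_mulVec_add {ι R : Type*} [Fintype ι] [CommSemiring R] (A : Matrix ι ι R)
    (x y : ι → R) :
    (x + y) ⬝ᵥ A *ᵥ (x + y) = x ⬝ᵥ A *ᵥ x + x ⬝ᵥ (A + Aᵀ) *ᵥ y + y ⬝ᵥ A *ᵥ y := by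
  have hyx : y ⬝ᵥ A *ᵥ x = x ⬝ᵥ Aᵀ *ᵥ y := by
    rw [dotProduct_mulVec, mulVec_transpose, dotProduct_comm]
  rw [mulVec_add, add_dotProduct, dotProduct_add, dotProduct_add, hyx, add_mulVec,
    dotProduct_add]
  abel

lemma exists_add_transpose_eq {ι R : Type*} [LinearOrder ι] [AddCommMonoid R]
    {B : Matrix ι ι R} (hB : B.IsSymm) (hdiag : ∀ i, B i i = 0) :
    ∃ A : Matrix ι ι R, A + Aᵀ = B := by
  refine ⟨of fun i j => if i < j then B i j else 0, ?_⟩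
  ext i j
  simp only [Matrix.add_apply, transpose_apply, of_apply]
  rcases lt_trichotomy i j with hij | rfl | hij
  · rw [if_pos hij, if_neg hij.not_gt, add_zero]
  · rw [if_neg (lt_irrefl i), add_zero, hdiag]
  · rw [if_neg hij.not_gt, if_pos hij, zero_add]
    exact hB.apply i j

section QuadraticTwist

variable {n : ℕ} (f : (Fin n → ZMod 2) → ℝ) (A : Matrix (Fin n) (Fin n) (ZMod 2))

lemma dderiv_mul_signChar_quadratic (y x : Fin n → ZMod 2) :
    dderiv (fun x => f x * signChar (x ⬝ᵥ A *ᵥ x)) y x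
      = signChar (y ⬝ᵥ A *ᵥ y) * (dderiv f y x * chi ((A + Aᵀ) *ᵥ y) x) := by
  simp only [dderiv, add_dotProduct_mulVec_add, AddChar.map_add_eq_mul, chi_comm _ x,
    chi_eq_signChar]
  linear_combination f x * f (x + y) * signChar (x ⬝ᵥ (A + Aᵀ) *ᵥ y) * signChar (y ⬝ᵥ A *ᵥ y)
    * signChar_sq (x ⬝ᵥ A *ᵥ x)

lemma fCoeff_dderiv_mul_signChar_quadratic (y : Fin n → ZMod 2) :
    fCoeff (dderiv (fun x => f x * signChar (x ⬝ᵥ A *ᵥ x)) y) 0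
      = signChar (y ⬝ᵥ A *ᵥ y) * fCoeff (dderiv f y) ((A + Aᵀ) *ᵥ y) := by
  simp only [fCoeff, dderiv_mul_signChar_quadratic, chi_zero_left, mul_one, ← mul_sum,
    mul_div_assoc]

lemma sum_mul_neg_one_pow_quadratic (α : Fin n → ZMod 2) (a : ZMod 2) :
    ∑ x, f x * (-1 : ℝ) ^ (x ⬝ᵥ A *ᵥ x + x ⬝ᵥ α + a).val
      = 2 ^ n * (signChar a * fCoeff (fun x => f x * signChar (x ⬝ᵥ A *ᵥ x)) α) := by
  have hterm : ∀ x, f x * (-1 : ℝ) ^ (x ⬝ᵥ A *ᵥ x + x ⬝ᵥ α + a).val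
      = signChar a * (f x * signChar (x ⬝ᵥ A *ᵥ x) * chi α x) := fun x => by
    rw [← signChar_apply, AddChar.map_add_eq_mul, AddChar.map_add_eq_mul, chi_comm,
      chi_eq_signChar]
    ring
  rw [sum_congr rfl fun x _ => hterm x, ← mul_sum, fCoeff]
  field_simp

end QuadraticTwist

lemma exists_sum_pow_four_le_sq {ι : Type*} [Fintype ι] [Nonempty ι] (u : ι → ℝ)
    (hu : ∑ i, u i ^ 2 = 1) : ∃ i, ∑ j, u j ^ 4 ≤ u i ^ 2 := by
  obtain ⟨i, hi⟩ := Finite.exists_max fun j => u j ^ 2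
  refine ⟨i, ?_⟩
  calc ∑ j, u j ^ 4 = ∑ j, u j ^ 2 * u j ^ 2 := sum_congr rfl fun j _ => by ring
    _ ≤ ∑ j, u j ^ 2 * u i ^ 2 :=
        sum_le_sum fun j _ => mul_le_mul_of_nonneg_left (hi j) (sq_nonneg _)
    _ = u i ^ 2 := by rw [← sum_mul, hu, one_mul]

open scoped Classical in
lemma card_filter_ne_eq {α : Type*} [Fintype α] (f g : α → ℝ) (hf : ∀ x, f x = 1 ∨ f x = -1)
    (hg : ∀ x, g x = 1 ∨ g x = -1) :
    ((univ.filter fun x => f x ≠ g x).card : ℝ) = (Fintype.card α - ∑ x, f x * g x) / 2 := by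
  have hind : ∀ x, (if f x ≠ g x then 1 else 0 : ℝ) = (1 - f x * g x) / 2 := fun x => by
    rcases hf x with hfx | hfx <;> rcases hg x with hgx | hgx <;> norm_num [hfx, hgx]
  rw [natCast_card_filter, sum_congr rfl fun x _ => hind x, ← sum_div, sum_sub_distrib,
    sum_const, card_univ, nsmul_one]

open scoped Classical in
theorem close_to_quadratic_of_symmetric_matrix_general {n : ℕ} (f : (Fin n → ZMod 2) → ℝ)
    (hf : ∀ x, f x = 1 ∨ f x = -1) (B : Matrix (Fin n) (Fin n) (ZMod 2))
    (hsymm : B.IsSymm) (hdiag : ∀ i, B i i = 0) (ε : ℝ)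
    (h : ε ≤ (∑ y : Fin n → ZMod 2, fCoeff (dderiv f y) (B.mulVec y) ^ 2) / 2 ^ n) :
    ∃ (A : Matrix (Fin n) (Fin n) (ZMod 2)) (α : Fin n → ZMod 2) (a : ZMod 2),
      A + A.transpose = B ∧
      ((univ.filter fun x : Fin n → ZMod 2 =>
          f x ≠ (-1 : ℝ) ^ (dotProduct x (A.mulVec x) + dotProduct x α + a).val).card : ℝ)
        / 2 ^ n ≤ 1 / 2 - ε / 2 := by
  obtain ⟨A, hA⟩ := exists_add_transpose_eq hsymm hdiag
  set H := fun x => f x * signChar (x ⬝ᵥ A *ᵥ x) with hH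
  have hparseval : ∑ α, fCoeff H α ^ 2 = 1 := by
    have hH1 : ∀ x, H x ^ 2 = 1 := fun x => by
      rw [hH, mul_pow, signChar_sq, mul_one, sq_eq_one_iff]; exact hf x
    simp [sum_fCoeff_sq, hH1]
  have hfour : ε ≤ ∑ α, fCoeff H α ^ 4 := by
    simpa only [hH, sum_fCoeff_pow_four, fCoeff_dderiv_mul_signChar_quadratic, hA, mul_pow,
      signChar_sq, one_mul] using h
  obtain ⟨α, hα⟩ := exists_sum_pow_four_le_sq _ hparseval
  obtain ⟨a, ha⟩ := exists_signChar_mul_eq_abs (fCoeff H α)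
  refine ⟨A, α, a, hA, ?_⟩
  have hdist : ε ≤ |fCoeff H α| := by
    have habs : |fCoeff H α| ≤ 1 := by
      rw [← sq_le_one_iff_abs_le_one, ← hparseval]
      exact single_le_sum (fun _ _ => sq_nonneg _) (mem_univ α)
    calc ε ≤ |fCoeff H α| * |fCoeff H α| := by rw [abs_mul_abs_self, ← sq]; exact hfour.trans hα
      _ ≤ |fCoeff H α| := mul_le_of_le_one_right (abs_nonneg _) habs
  rw [card_filter_ne_eq f (fun x => (-1 : ℝ) ^ (x ⬝ᵥ A *ᵥ x + x ⬝ᵥ α + a).val) hf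
    (fun x => signChar_eq_one_or_eq_neg_one _), sum_mul_neg_one_pow_quadratic, ha]
  simp only [Fintype.card_fun, ZMod.card, Fintype.card_fin, Nat.cast_pow, Nat.cast_ofNat]
  field_simp
  linarith

open scoped Classical in
/-- If `B` is symmetric with zero diagonal and `E_y f̂_y²(By) ≥ ε`, then there is a quadratic
polynomial `g(x) = (-1)^{⟨x,Ax⟩+⟨x,α⟩+a}` with `A + Aᵀ = B` whose distance from `f` is at most
`1/2 - ε/2`. -/
theorem close_to_quadratic_of_symmetric_matrix {n : ℕ} (f : (Fin n → ZMod 2) → ℝ)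
    (hf : ∀ x, f x = 1 ∨ f x = -1) (B : Matrix (Fin n) (Fin n) (ZMod 2))
    (hsymm : B.IsSymm) (hdiag : ∀ i, B i i = 0) (ε : ℝ) (hε : 0 < ε)
    (h : ε ≤ (∑ y : Fin n → ZMod 2, fCoeff (dderiv f y) (B.mulVec y) ^ 2) / 2 ^ n) :
    ∃ (A : Matrix (Fin n) (Fin n) (ZMod 2)) (α : Fin n → ZMod 2) (a : ZMod 2),
      A + A.transpose = B ∧
      ((univ.filter fun x : Fin n → ZMod 2 =>
          f x ≠ (-1 : ℝ) ^ (dotProduct x (A.mulVec x) + dotProduct x α + a).val).card : ℝ)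
        / 2 ^ n ≤ 1 / 2 - ε / 2 :=
  close_to_quadratic_of_symmetric_matrix_general f hf B hsymm hdiag ε h
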